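/- Let K be the unit circle centered at the origin in ℝ². A connected compact set S ⊆ ℝ² intersects every tangent line to K if and only if the closed unit disk is contained in the convex hull of S. -/

import Mathlib

/-!
A linear form maps a connected set and its convex hull onto the same interval of `ℝ`. So if the
disk lies in `convexHull ℝ S`, then for a unit vector `u` the value `⟪u, u⟫ = 1` is taken by
`⟪u, ·⟫` on `S`. Conversely, `convexHull ℝ S` is compact by Carathéodory's theorem, so a point
`x` of the disk outside it is strictly separated from it by some `⟪u, ·⟫` with `‖u‖ = 1`; but
`⟪u, x⟫ ≤ 1` while `S` meets the tangent line `⟪u, ·⟫ = 1`.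
-/

open Set Module

open scoped RealInnerProductSpace

/-- Carathéodory's theorem, with the index types `Fin n` for `n ≤ finrank 𝕜 E + 1`. -/
theorem convexHull_eq_iUnion_image_stdSimplex {𝕜 E : Type*} [Field 𝕜] [LinearOrder 𝕜]
    [IsStrictOrderedRing 𝕜] [AddCommGroup E] [Module 𝕜 E] [FiniteDimensional 𝕜 E] (s : Set E) :
    convexHull 𝕜 s = ⋃ n : Fin (finrank 𝕜 E + 2),
      (fun p : (Fin n → 𝕜) × (Fin n → E) ↦ ∑ i, p.1 i • p.2 i) ''
        (stdSimplex 𝕜 (Fin n) ×ˢ univ.pi fun _ ↦ s) := by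
  refine Subset.antisymm (fun x hx ↦ ?_) (iUnion_subset fun n ↦ ?_)
  · obtain ⟨ι, _, z, w, hzs, hz, hw₀, hw₁, rfl⟩ := eq_pos_convex_span_of_mem_convexHull hx
    have hcard : Fintype.card ι < finrank 𝕜 E + 2 :=
      Nat.lt_succ_of_le <| hz.card_le_finrank_succ.trans <|
        Nat.succ_le_succ (Submodule.finrank_le _)
    let e := Fintype.equivFin ι
    refine mem_iUnion.2 ⟨⟨_, hcard⟩, (w ∘ e.symm, z ∘ e.symm),
      ⟨⟨fun i ↦ (hw₀ _).le, ?_⟩, fun i _ ↦ hzs (mem_range_self _)⟩, ?_⟩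
    · simpa only [Function.comp_apply, e.symm.sum_comp] using hw₁
    · exact e.symm.sum_comp fun i ↦ w i • z i
  · rintro _ ⟨⟨w, z⟩, ⟨hw, hz⟩, rfl⟩
    exact (convex_convexHull 𝕜 s).sum_mem (fun i _ ↦ hw.1 i) hw.2
      fun i _ ↦ subset_convexHull 𝕜 s (hz i (mem_univ i))

theorem IsCompact.convexHull {E : Type*} [AddCommGroup E] [Module ℝ E] [TopologicalSpace E]
    [IsTopologicalAddGroup E] [ContinuousSMul ℝ E] [FiniteDimensional ℝ E] {s : Set E}
    (hs : IsCompact s) : IsCompact (convexHull ℝ s) := by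
  rw [convexHull_eq_iUnion_image_stdSimplex]
  exact isCompact_iUnion fun n ↦
    ((isCompact_stdSimplex ℝ _).prod (isCompact_univ_pi fun _ ↦ hs)).image (by fun_prop)

theorem IsPreconnected.image_convexHull {E : Type*} [AddCommGroup E] [Module ℝ E]
    [TopologicalSpace E] {s : Set E} (hs : IsPreconnected s) (f : E →L[ℝ] ℝ) :
    f '' convexHull ℝ s = f '' s := by
  rw [← f.coe_coe, LinearMap.image_convexHull, f.coe_coe,
    (isPreconnected_iff_ordConnected.1 (hs.image f f.continuous.continuousOn)).convex.convexHull_eq]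

theorem closedBall_subset_of_forall_exists_one_le_inner {E : Type*} [NormedAddCommGroup E]
    [InnerProductSpace ℝ E] [CompleteSpace E] {C : Set E} (hconv : Convex ℝ C)
    (hclosed : IsClosed C) (hne : C.Nonempty) (h : ∀ u : E, ‖u‖ = 1 → ∃ c ∈ C, 1 ≤ ⟪u, c⟫) :
    Metric.closedBall 0 1 ⊆ C := by
  intro x hx
  by_contra hxC
  obtain ⟨f, t, hfC, hfx⟩ := geometric_hahn_banach_closed_point hconv hclosed hxC
  obtain ⟨v, rfl⟩ := (InnerProductSpace.toDual ℝ E).surjective f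
  simp only [InnerProductSpace.toDual_apply_apply] at hfC hfx
  have hv : v ≠ 0 := by
    rintro rfl
    obtain ⟨c, hc⟩ := hne
    simp only [inner_zero_left] at hfC hfx
    linarith [hfC c hc]
  have hv' : 0 < ‖v‖ := norm_pos_iff.2 hv
  obtain ⟨c, hc, hle⟩ :=
    h (‖v‖⁻¹ • v) (by rw [norm_smul, norm_inv, norm_norm, inv_mul_cancel₀ hv'.ne'])
  rw [real_inner_smul_left, le_inv_mul_iff₀ hv', mul_one] at hle
  have hx1 : ‖x‖ ≤ 1 := mem_closedBall_zero_iff.1 hx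
  refine lt_irrefl ‖v‖ ?_
  calc ‖v‖ ≤ ⟪v, c⟫ := hle
    _ < t := hfC c hc
    _ < ⟪v, x⟫ := hfx
    _ ≤ ‖v‖ * ‖x‖ := real_inner_le_norm v x
    _ ≤ ‖v‖ := mul_le_of_le_one_right hv'.le hx1

/-- A connected compact set `S ⊆ ℝ²` meets every tangent line to the unit circle
(the lines `{x | ⟪u, x⟫ = 1}` with `‖u‖ = 1`, i.e. the lines at distance exactly `1`
from the origin) if and only if the closed unit disk is contained in `convexHull ℝ S`. -/
theorem meets_all_tangents_iff_disk_subset_hull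
    (S : Set (EuclideanSpace ℝ (Fin 2)))
    (hScomp : IsCompact S) (hSconn : IsConnected S) :
    (∀ u : EuclideanSpace ℝ (Fin 2), ‖u‖ = 1 →
        (S ∩ {x | (inner ℝ u x : ℝ) = 1}).Nonempty)
      ↔ Metric.closedBall (0 : EuclideanSpace ℝ (Fin 2)) 1 ⊆ convexHull ℝ S := by
  constructor
  · intro h
    refine closedBall_subset_of_forall_exists_one_le_inner (convex_convexHull ℝ S)
      hScomp.convexHull.isClosed hSconn.nonempty.convexHull fun u hu ↦ ?_
    obtain ⟨s, hsS, hs⟩ := h u hu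
    exact ⟨s, subset_convexHull ℝ S hsS, hs.ge⟩
  · intro h u hu
    have hu_mem : innerSL ℝ u u ∈ innerSL ℝ u '' convexHull ℝ S :=
      mem_image_of_mem _ (h (mem_closedBall_zero_iff.2 hu.le))
    rw [hSconn.isPreconnected.image_convexHull] at hu_mem
    obtain ⟨s, hsS, hs⟩ := hu_mem
    refine ⟨s, hsS, ?_⟩
    simpa [real_inner_self_eq_norm_sq, hu] using hs
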